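/- arXiv:1012.2738 — 5 statements merged into one kernel-verified Lean document; each statement's English description precedes it below -/
import Mathlib

section
/- Let 0 < δ ≤ 1, ε > 0, n ≥ 1 be such that δ·n/2 is a positive integer, and let q ≥ 2. Let C ⊆ (Fin n → Bool) be a nonempty code with relative distance at least δ, and let H be a (δ/2, ε)-test-hypergraph for C with a nonempty set E of hyperedges, each hyperedge of size at most q. Then the number of coordinates v ∈ Fin n contained in fewer than 2ε·|E|/(δ·n) hyperedges of H is strictly less than δ·n/2. -/
/-!
If `δn/2` coordinates had low degree, flip a codeword `y` on exactly `δn/2` of them. The new word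
is at relative distance `δ/2` from `y`, and by the triangle inequality at least `δ/2` from every
other codeword, so it violates at least `ε|E|` hyperedges. A violated hyperedge must contain a
flipped coordinate, so there are at most as many as the total degree of the flipped coordinates,
which is less than `(δn/2) · 2ε|E|/(δn) = ε|E|`.
-/

open Finset Real MeasureTheory ProbabilityTheory

namespace LTCPaper

/-- A hyperedge over coordinates `Fin n`: a finite set `h` of coordinates together with a
constraint `f_h : (h → Bool) → Bool` on assignments to those coordinates. -/
abbrev Edge (n : ℕ) := Σ h : Finset (Fin n), ({v // v ∈ h} → Bool) → Bool

/-- `x` satisfies the hyperedge `e` if the constraint accepts the restriction of `x` to it. -/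
def sat {n : ℕ} (x : Fin n → Bool) (e : Edge n) : Prop :=
  e.2 (fun v => x v.1) = true

instance {n : ℕ} (x : Fin n → Bool) (e : Edge n) : Decidable (sat x e) :=
  inferInstanceAs (Decidable (_ = true))

/-- Relative Hamming distance: fraction of coordinates on which `x` and `y` differ. -/
noncomputable def relDist {n : ℕ} (x y : Fin n → Bool) : ℝ :=
  (hammingDist x y : ℝ) / n

/-- `x` has relative distance at least `τ` from the code `C`. -/
def farFrom {n : ℕ} (C : Set (Fin n → Bool)) (x : Fin n → Bool) (τ : ℝ) : Prop :=
  ∀ y ∈ C, τ ≤ relDist x y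

/-- `C` has relative distance at least `δ`. -/
def hasDistance {n : ℕ} (C : Set (Fin n → Bool)) (δ : ℝ) : Prop :=
  ∀ x ∈ C, ∀ y ∈ C, x ≠ y → δ ≤ relDist x y

/-- `E` is a `(τ,ε)`-test-hypergraph for `C`: all codewords satisfy all hyperedges, and every
word at relative distance at least `τ` from `C` falsifies at least an `ε` fraction of them. -/
def IsTestHypergraph {n : ℕ} (C : Set (Fin n → Bool)) (E : Finset (Edge n)) (τ ε : ℝ) : Prop :=
  (∀ x ∈ C, ∀ e ∈ E, sat x e) ∧
  (∀ x : Fin n → Bool, farFrom C x τ →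
    ε * E.card ≤ ((E.filter fun e => ¬ sat x e).card : ℝ))

/-- A constraint is LOF ("last-one-fixed") if any two accepted assignments agreeing on all but
one coordinate agree on that coordinate as well. -/
def LOF {n : ℕ} (e : Edge n) : Prop :=
  ∀ a b : {v // v ∈ e.1} → Bool, e.2 a = true → e.2 b = true →
    ∀ u : {v // v ∈ e.1}, (∀ v : {v // v ∈ e.1}, v ≠ u → a v = b v) → a u = b u

variable {n : ℕ}

def degree (E : Finset (Edge n)) (v : Fin n) : ℕ :=
  (E.filter fun e => v ∈ e.1).card

def flipOn (S : Finset (Fin n)) (y : Fin n → Bool) : Fin n → Bool :=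
  fun v => if v ∈ S then !y v else y v

lemma hammingDist_flipOn (S : Finset (Fin n)) (y : Fin n → Bool) :
    hammingDist (flipOn S y) y = S.card := by
  unfold hammingDist
  congr 1
  ext v
  by_cases hv : v ∈ S <;> simp [flipOn, hv]

lemma relDist_comm (x y : Fin n → Bool) : relDist x y = relDist y x := by
  rw [relDist, relDist, hammingDist_comm]

lemma relDist_triangle (x y z : Fin n → Bool) : relDist x z ≤ relDist x y + relDist y z := by
  rw [relDist, relDist, relDist, ← add_div]
  gcongr
  exact_mod_cast hammingDist_triangle x y z

lemma farFrom_of_relDist_eq_half {C : Set (Fin n → Bool)} {δ : ℝ} (hdist : hasDistance C δ)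
    {x y : Fin n → Bool} (hy : y ∈ C) (hxy : relDist x y = δ / 2) : farFrom C x (δ / 2) := by
  intro y' hy'
  obtain rfl | hne := eq_or_ne y y'
  · exact hxy.ge
  · have := relDist_triangle y x y'
    linarith [hdist y hy y' hy' hne, relDist_comm x y]

lemma sat_congr {x y : Fin n → Bool} {e : Edge n} (h : ∀ v ∈ e.1, x v = y v) :
    sat x e ↔ sat y e := by
  unfold sat
  rw [show (fun v : {v // v ∈ e.1} => x v.1) = fun v => y v.1 from funext fun v => h v.1 v.2]

/-- A hyperedge satisfied by `y` but not by `x` contains a coordinate where `x` and `y` differ. -/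
lemma card_filter_not_sat_le_sum_degree {E : Finset (Edge n)} {x y : Fin n → Bool}
    (hy : ∀ e ∈ E, sat y e) {S : Finset (Fin n)} (hS : ∀ v, x v ≠ y v → v ∈ S) :
    (E.filter fun e => ¬ sat x e).card ≤ ∑ v ∈ S, degree E v := by
  refine (card_le_card fun e he => ?_).trans card_biUnion_le
  obtain ⟨heE, hx⟩ := mem_filter.mp he
  obtain ⟨v, hve, hv⟩ : ∃ v ∈ e.1, x v ≠ y v := by
    by_contra! hagree
    exact hx ((sat_congr hagree).mpr (hy e heE))
  exact mem_biUnion.mpr ⟨v, hS v hv, mem_filter.mpr ⟨heE, hve⟩⟩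

theorem few_low_degree_vertices_general {n : ℕ} (δ ε : ℝ)
    (hint : ∃ k : ℕ, 0 < k ∧ (k : ℝ) = δ * n / 2)
    (C : Set (Fin n → Bool)) (hC : C.Nonempty)
    (E : Finset (Edge n))
    (hdist : hasDistance C δ)
    (htest : IsTestHypergraph C E (δ / 2) ε) :
    (({v : Fin n |
        ((E.filter fun e => v ∈ e.1).card : ℝ) < 2 * ε * E.card / (δ * n)}.ncard : ℝ))
      < δ * n / 2 := by
  classical
  obtain ⟨k, hk0, hk⟩ := hint
  obtain ⟨y, hy⟩ := hC
  have hδn : 0 < δ * n := by linarith [show (0 : ℝ) < k by exact_mod_cast hk0]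
  have hδ0 : δ ≠ 0 := left_ne_zero_of_mul hδn.ne'
  have hn0 : (n : ℝ) ≠ 0 := right_ne_zero_of_mul hδn.ne'
  rw [Set.ncard_eq_toFinset_card', Set.toFinset_ofPred, ← hk, Nat.cast_lt]
  by_contra! hlow
  obtain ⟨S, hSlow, hScard⟩ := exists_subset_card_eq hlow
  have hfar : farFrom C (flipOn S y) (δ / 2) := by
    refine farFrom_of_relDist_eq_half hdist hy ?_
    rw [relDist, hammingDist_flipOn, hScard, hk]
    field_simp
  have hflip : ∀ v, flipOn S y v ≠ y v → v ∈ S := fun v hv => by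
    by_contra hvS
    exact hv (if_neg hvS)
  have := calc ε * E.card
      ≤ (E.filter fun e => ¬ sat (flipOn S y) e).card := htest.2 _ hfar
    _ ≤ ∑ v ∈ S, (degree E v : ℝ) := by
      exact_mod_cast card_filter_not_sat_le_sum_degree (htest.1 y hy) hflip
    _ < ∑ _v ∈ S, 2 * ε * E.card / (δ * n) := sum_lt_sum_of_nonempty
      (card_pos.mp (hScard ▸ hk0)) fun v hv => (mem_filter.mp (hSlow hv)).2
    _ = ε * E.card := by
      rw [sum_const, hScard, nsmul_eq_mul, hk]
      field_simp
  exact lt_irrefl _ this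

/-- **Lemma (few low-degree vertices).** For a `(δ/2, ε)`-test-hypergraph of a code of relative
distance at least `δ`, fewer than `δn/2` coordinates are contained in fewer than `2ε|E|/(δn)`
hyperedges. -/
theorem few_low_degree_vertices {n q : ℕ} (δ ε : ℝ)
    (hδ : 0 < δ) (hδ1 : δ ≤ 1) (hε : 0 < ε) (hn : 1 ≤ n) (hq : 2 ≤ q)
    (hint : ∃ k : ℕ, 0 < k ∧ (k : ℝ) = δ * n / 2)
    (C : Set (Fin n → Bool)) (hC : C.Nonempty)
    (E : Finset (Edge n)) (hE : E.Nonempty)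
    (hsize : ∀ e ∈ E, e.1.card ≤ q)
    (hdist : hasDistance C δ)
    (htest : IsTestHypergraph C E (δ / 2) ε) :
    (({v : Fin n |
        ((E.filter fun e => v ∈ e.1).card : ℝ) < 2 * ε * E.card / (δ * n)}.ncard : ℝ))
      < δ * n / 2 :=
  few_low_degree_vertices_general δ ε hint C hC E hdist htest

end LTCPaper
end

section
/- Let C ⊆ (Fin n → Bool) be a code and let H be a test-hypergraph for C whose constraints are all LOF. Let x, y ∈ C and let B ⊆ Fin n satisfy x|_B = y|_B. Suppose u, u' ∉ B are distinct coordinates and there exists b ∈ B such that {u, u', b} is a hyperedge of H. Then x(u) = y(u) if and only if x(u') = y(u'). (Consequently, the set of coordinates outside B at which x and y differ is a union of connected components of the graph G_B.) -/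
open Finset Real MeasureTheory ProbabilityTheory

namespace LTCPaper

/-- The set `s` is (the vertex set of) a hyperedge of `E`. -/
def isEdgeSet {n : ℕ} (E : Finset (Edge n)) (s : Finset (Fin n)) : Prop :=
  ∃ e ∈ E, e.1 = s

/-- **Lemma (difference set is a union of components).** If `x, y` are codewords agreeing on `B`,
the constraints are LOF, and `{u, u', b}` is a hyperedge with `b ∈ B` and `u, u' ∉ B` distinct,
then `x` and `y` agree at `u` iff they agree at `u'`. -/
theorem lof_edge_agree_iff {n : ℕ} (C : Set (Fin n → Bool)) (E : Finset (Edge n))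
    (hcomplete : ∀ z ∈ C, ∀ e ∈ E, sat z e)
    (hlof : ∀ e ∈ E, LOF e)
    (x y : Fin n → Bool) (hx : x ∈ C) (hy : y ∈ C)
    (B : Set (Fin n)) (hagree : ∀ v ∈ B, x v = y v)
    (u u' : Fin n) (hu : u ∉ B) (hu' : u' ∉ B) (huu' : u ≠ u')
    (b : Fin n) (hb : b ∈ B)
    (hedge : isEdgeSet E {u, u', b}) :
    (x u = y u ↔ x u' = y u') := by
  obtain ⟨e, heE, hset⟩ := hedge
  have hxe : sat x e := hcomplete x hx e heE
  have hye : sat y e := hcomplete y hy e heE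
  have hlofe := hlof e heE
  have hbu : b ≠ u := fun h => hu (h ▸ hb)
  have hbu' : b ≠ u' := fun h => hu' (h ▸ hb)
  have hmem : ∀ w : Fin n, w ∈ e.1 → w = u ∨ w = u' ∨ w = b := by
    intro w hw
    rw [hset] at hw
    simpa using hw
  have humem : u ∈ e.1 := by rw [hset]; simp
  have hu'mem : u' ∈ e.1 := by rw [hset]; simp
  have key : ∀ p q : Fin n, p ∈ e.1 → q ∈ e.1 → p ≠ q →
      (∀ w : Fin n, w ∈ e.1 → w = p ∨ w = q ∨ w = b) →
      x q = y q → x p = y p := by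
    intro p q hp hq hpq hall hxq
    have := hlofe (fun v => x v.1) (fun v => y v.1) hxe hye ⟨p, hp⟩ ?_
    · exact this
    · intro v hv
      rcases hall v.1 v.2 with h | h | h
      · exact absurd (Subtype.ext h) hv
      · simpa [h] using hxq
      · simpa [h] using hagree b hb
  constructor
  · intro h
    exact key u' u hu'mem humem (Ne.symm huu') (fun w hw => by
      rcases hmem w hw with h | h | h <;> tauto) h
  · intro h
    exact key u u' humem hu'mem huu' hmem h

end LTCPaper
end

section
/- Let (Ω, P) be a probability space, let U be a finite index set, let c : U → ℕ be an assignment of indices to classes, and let (I_u)_{u ∈ U} be random variables each taking values in {0,1}, such that the σ-algebras generated by the families {I_u : c(u) = i}, for distinct values of i, are mutually independent. Then the variance of I = Σ_{u ∈ U} I_u satisfies Var(I) ≤ Σ_{u ∈ U} m(u)·E[I_u], where m(u) = |{u' ∈ U : c(u') = c(u)}| is the size of the class of u. -/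
/-! Expanding the square, `Var(Σ I_u) = Σ_{u,v} (E[I_u I_v] - E[I_u] E[I_v])`. A pair from
different classes is independent and contributes `0`; a pair from the same class contributes at
most `E[I_u I_v] ≤ E[I_u]`, since `0 ≤ I_v ≤ 1`. Summing over `v` gives `m(u) E[I_u]`. -/

open Finset Real MeasureTheory ProbabilityTheory

namespace LTCPaper

section

variable {Ω : Type*} [MeasurableSpace Ω] {μ : Measure Ω}

theorem integrable_of_mem_unitInterval [IsFiniteMeasure μ] {f : Ω → ℝ} (hf : Measurable f)
    (h01 : ∀ ω, f ω ∈ unitInterval) : Integrable f μ :=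
  .of_bound hf.aestronglyMeasurable 1 <| ae_of_all _ fun ω => by
    rw [Real.norm_eq_abs, abs_le]
    exact ⟨by linarith [(h01 ω).1], (h01 ω).2⟩

theorem integral_sq_sum_sub_sq_integral_sum {ι : Type*} (s : Finset ι) (f : ι → Ω → ℝ)
    (hf : ∀ i, Integrable (f i) μ) (hff : ∀ i j, Integrable (fun ω => f i ω * f j ω) μ) :
    (∫ ω, (∑ i ∈ s, f i ω) ^ 2 ∂μ) - (∫ ω, ∑ i ∈ s, f i ω ∂μ) ^ 2
      = ∑ i ∈ s, ∑ j ∈ s, ((∫ ω, f i ω * f j ω ∂μ) - (∫ ω, f i ω ∂μ) * ∫ ω, f j ω ∂μ) := by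
  simp_rw [sq, Finset.sum_mul_sum]
  rw [integral_finsetSum _ fun i _ => integrable_finsetSum _ fun j _ => hff i j,
    integral_finsetSum _ fun i _ => hf i, Finset.sum_mul_sum, ← Finset.sum_sub_distrib]
  refine Finset.sum_congr rfl fun i _ => ?_
  rw [integral_finsetSum _ fun j _ => hff i j, ← Finset.sum_sub_distrib]

theorem integral_mul_sub_mul_integral_le_integral {f g : Ω → ℝ} (hf0 : 0 ≤ f) (hg0 : 0 ≤ g)
    (hg1 : g ≤ 1) (hf : Integrable f μ) (hfg : Integrable (fun ω => f ω * g ω) μ) :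
    (∫ ω, f ω * g ω ∂μ) - (∫ ω, f ω ∂μ) * ∫ ω, g ω ∂μ ≤ ∫ ω, f ω ∂μ := by
  have hmul_le : ∫ ω, f ω * g ω ∂μ ≤ ∫ ω, f ω ∂μ :=
    integral_mono hfg hf fun ω => mul_le_of_le_one_right (hf0 ω) (hg1 ω)
  have hprod_nonneg : 0 ≤ (∫ ω, f ω ∂μ) * ∫ ω, g ω ∂μ :=
    mul_nonneg (integral_nonneg hf0) (integral_nonneg hg0)
  linarith

theorem indepFun_of_iIndep_iSup_comap {ι β U : Type*} [MeasurableSpace β] {c : U → ι}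
    {X : U → Ω → β}
    (h : iIndep (fun i => ⨆ u ∈ {u | c u = i}, MeasurableSpace.comap (X u) inferInstance) μ)
    {u v : U} (huv : c u ≠ c v) : IndepFun (X u) (X v) μ :=
  have hle : ∀ w, MeasurableSpace.comap (X w) ‹_› ≤
      ⨆ w' ∈ {w' | c w' = c w}, MeasurableSpace.comap (X w') inferInstance := fun w =>
    le_biSup (fun w' => MeasurableSpace.comap (X w') ‹_›) (show w ∈ {w' | c w' = c w} from rfl)
  indep_of_indep_of_le_right (indep_of_indep_of_le_left (h.indep huv) (hle u)) (hle v)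

end

theorem variance_bound_classwise_indep_general
    {Ω : Type*} [MeasurableSpace Ω] (P : Measure Ω) [IsProbabilityMeasure P]
    {U : Type*} [Fintype U] (c : U → ℕ) (I : U → Ω → ℝ)
    (hmeas : ∀ u, Measurable (I u))
    (hind : ∀ u ω, I u ω = 0 ∨ I u ω = 1)
    (hindep : iIndep
      (fun i : ℕ => ⨆ u ∈ {u : U | c u = i},
        MeasurableSpace.comap (I u) (inferInstance : MeasurableSpace ℝ)) P) :
    (∫ ω, (∑ u, I u ω) ^ 2 ∂P) - (∫ ω, (∑ u, I u ω) ∂P) ^ 2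
      ≤ ∑ u : U, ((Finset.univ.filter fun u' => c u' = c u).card : ℝ) * ∫ ω, I u ω ∂P := by
  have hI01 : ∀ u ω, I u ω ∈ unitInterval := fun u ω => by
    rcases hind u ω with h | h <;> simp [h]
  have hint : ∀ u, Integrable (I u) P := fun u =>
    integrable_of_mem_unitInterval (hmeas u) (hI01 u)
  have hint_mul : ∀ u v, Integrable (fun ω => I u ω * I v ω) P := fun u v =>
    integrable_of_mem_unitInterval ((hmeas u).mul (hmeas v))
      fun ω => unitInterval.mul_mem (hI01 u ω) (hI01 v ω)
  have hcov : ∀ u v, (∫ ω, I u ω * I v ω ∂P) - (∫ ω, I u ω ∂P) * ∫ ω, I v ω ∂P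
      ≤ if c v = c u then ∫ ω, I u ω ∂P else 0 := by
    intro u v
    split_ifs with hcls
    · exact integral_mul_sub_mul_integral_le_integral (fun ω => (hI01 u ω).1)
        (fun ω => (hI01 v ω).1) (fun ω => (hI01 v ω).2) (hint u) (hint_mul u v)
    · have hindep_uv := indepFun_of_iIndep_iSup_comap hindep (Ne.symm hcls)
      exact sub_nonpos.mpr (hindep_uv.integral_mul_eq_mul_integral
        (hmeas u).aestronglyMeasurable (hmeas v).aestronglyMeasurable).le
  rw [integral_sq_sum_sub_sq_integral_sum _ _ hint hint_mul]
  refine Finset.sum_le_sum fun u _ => (Finset.sum_le_sum fun v _ => hcov u v).trans_eq ?_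
  rw [Finset.sum_ite, Finset.sum_const_zero, add_zero, Finset.sum_const, nsmul_eq_mul]

/-- **Lemma (variance bound for class-wise independent indicators).** If the indicator variables
`I_u` are grouped into classes by `c` and the σ-algebras generated by distinct classes are
mutually independent, then `Var(Σ I_u) ≤ Σ_u m(u)·E[I_u]` where `m(u)` is the class size of `u`. -/
theorem variance_bound_classwise_indep
    {Ω : Type*} [MeasurableSpace Ω] (P : Measure Ω) [IsProbabilityMeasure P]
    {U : Type*} [Fintype U] [DecidableEq U] (c : U → ℕ) (I : U → Ω → ℝ)
    (hmeas : ∀ u, Measurable (I u))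
    (hind : ∀ u ω, I u ω = 0 ∨ I u ω = 1)
    (hindep : iIndep
      (fun i : ℕ => ⨆ u ∈ {u : U | c u = i},
        MeasurableSpace.comap (I u) (inferInstance : MeasurableSpace ℝ)) P) :
    (∫ ω, (∑ u, I u ω) ^ 2 ∂P) - (∫ ω, (∑ u, I u ω) ∂P) ^ 2
      ≤ ∑ u : U, ((Finset.univ.filter fun u' => c u' = c u).card : ℝ) * ∫ ω, I u ω ∂P :=
  variance_bound_classwise_indep_general P c I hmeas hind hindep

end LTCPaper
end

section
/- For all integers q ≥ 3 and i with 1 ≤ i ≤ q−2, and all reals α > 0 and d > 0 such that 6^q/(α·d) ≤ 1, one has (1 − 6^q/(α·d))^(α·d/(2·5^(q−2−i))) ≤ 1/(8q+1), where the left-hand side is a real power (rpow). Equivalently, setting p = 6^q/(α·d), the quantity p_i := 1 − (1−p)^(α·d/(2·5^(q−2−i))) satisfies p_i ≥ 1 − 1/(8q+1). -/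
/-!
With `p = 6^q / (α d)` and `t = α d / (2 · 5^(q-2-i))`, the bound `1 - p ≤ exp (-p)` gives
`(1 - p)^t ≤ exp (-c)` with `c = p t = 6^q / (2 · 5^(q-2-i))`, independent of `α d`.
As `i ≥ 1`, `c ≥ 6^q / (2 · 5^(q-3)) ≥ 8q`, and `exp (-c) ≤ 1 / (c + 1)`.
-/

open Real

namespace LTCPaper

theorem rpow_one_sub_le_exp_neg_mul {p t : ℝ} (hp : p ≤ 1) (ht : 0 ≤ t) :
    (1 - p) ^ t ≤ exp (-(p * t)) :=
  calc (1 - p) ^ t ≤ exp (-p) ^ t := rpow_le_rpow (by linarith) (one_sub_le_exp_neg p) ht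
    _ = exp (-(p * t)) := by rw [← exp_mul, neg_mul]

theorem exp_neg_le_one_div_add_one {c : ℝ} (hc : 0 ≤ c) : exp (-c) ≤ 1 / (c + 1) := by
  rw [exp_neg, inv_eq_one_div]
  exact one_div_le_one_div_of_le (by linarith) (add_one_le_exp c)

theorem mul_five_pow_le_six_pow_add_three (m : ℕ) : (16 * m + 48) * 5 ^ m ≤ 6 ^ (m + 3) := by
  induction m with
  | zero => norm_num
  | succ m ih =>
    have h56 : 80 * 5 ^ m ≤ 216 * 6 ^ m :=
      Nat.mul_le_mul (by norm_num) (Nat.pow_le_pow_left (by norm_num) m)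
    calc (16 * (m + 1) + 48) * 5 ^ (m + 1) = 5 * ((16 * m + 48) * 5 ^ m) + 80 * 5 ^ m := by ring
      _ ≤ 5 * 6 ^ (m + 3) + 216 * 6 ^ m := by gcongr
      _ = 6 ^ (m + 1 + 3) := by ring

theorem eight_mul_le_six_pow_div_five_pow {q k : ℕ} (hq : 3 ≤ q) (hk : k ≤ q - 3) :
    8 * (q : ℝ) ≤ 6 ^ q / (2 * 5 ^ k) := by
  obtain ⟨m, rfl⟩ : ∃ m, q = m + 3 := ⟨q - 3, by omega⟩
  have hnat : ((16 * m + 48) * 5 ^ m : ℝ) ≤ 6 ^ (m + 3) := by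
    exact_mod_cast mul_five_pow_le_six_pow_add_three m
  have hk5 : (5 : ℝ) ^ k ≤ 5 ^ m := pow_le_pow_right₀ (by norm_num) (by omega)
  rw [le_div_iff₀ (by positivity)]
  push_cast
  nlinarith

theorem heavy_edge_selection_prob_general (q i : ℕ) (hq : 3 ≤ q) (hi1 : 1 ≤ i)
    (α d : ℝ) (hα : 0 < α) (hd : 0 < d)
    (hp : (6 : ℝ) ^ q / (α * d) ≤ 1) :
    (1 - (6 : ℝ) ^ q / (α * d)) ^ (α * d / (2 * (5 : ℝ) ^ (q - 2 - i)))
      ≤ 1 / (8 * (q : ℝ) + 1) := by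
  have had : 0 < α * d := mul_pos hα hd
  set c : ℝ := 6 ^ q / (2 * 5 ^ (q - 2 - i)) with hc_def
  have hpt : 6 ^ q / (α * d) * (α * d / (2 * 5 ^ (q - 2 - i))) = c := by
    rw [hc_def]; field_simp
  have hc : 8 * (q : ℝ) ≤ c := eight_mul_le_six_pow_div_five_pow hq (by omega)
  calc _ ≤ exp (-c) := hpt ▸ rpow_one_sub_le_exp_neg_mul hp (by positivity)
    _ ≤ 1 / (c + 1) := exp_neg_le_one_div_add_one (by positivity)
    _ ≤ 1 / (8 * q + 1) := one_div_le_one_div_of_le (by positivity) (by linarith)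

/-- **Claim (heavy edges are selected with high probability).** For `3 ≤ q`, `1 ≤ i ≤ q − 2` and
`p = 6^q/(α·d) ≤ 1`, we have `(1 − p)^(α·d/(2·5^(q−2−i))) ≤ 1/(8q+1)`; equivalently the success
probability `p_i = 1 − (1−p)^(α·d/(2·5^(q−2−i)))` is at least `1 − 1/(8q+1)`. -/
theorem heavy_edge_selection_prob (q i : ℕ) (hq : 3 ≤ q) (hi1 : 1 ≤ i) (hi2 : i ≤ q - 2)
    (α d : ℝ) (hα : 0 < α) (hd : 0 < d)
    (hp : (6 : ℝ) ^ q / (α * d) ≤ 1) :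
    (1 - (6 : ℝ) ^ q / (α * d)) ^ (α * d / (2 * (5 : ℝ) ^ (q - 2 - i)))
      ≤ 1 / (8 * (q : ℝ) + 1) :=
  heavy_edge_selection_prob_general q i hq hi1 α d hα hd hp

end LTCPaper
end

section
/- For all reals δ, τ, ε > 0 and all integers q ≥ 3 and q' ≥ 1 there exists ε' > 0 (depending only on τ, ε, q, q') such that the following holds for every n ≥ q': if C ⊆ (Fin n → Bool) is a code with relative distance at least δ that has a q-query (τ, ε)-test-hypergraph H, then there exists a code C' ⊆ (Fin (2n) → Bool) of length 2n with |C'| = |C| (so its rate is half the rate of C), such that any two distinct codewords of C' differ in at least δ·n coordinates (relative distance at least δ/2), and C' has a (q+q')-query (τ, ε')-test-hypergraph H' with exactly |E(H)| · (n choose q') hyperedges. -/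
/-! Pad every codeword with `n` zeros, and test a word of length `2n` by a test of `E` on its
first half together with zero checks on a `q'`-subset of its second half. A word far from the
padded code either has a first half far from `C`, which the tests of `E` reject with frequency
`ε`, or at least `τ n` ones in its second half, which a random `q'`-subset hits with probability
at least `τ` (a random `q'`-subset meets a set at least as often as a random point does). Hence
`ε' = min ε τ` works. -/

open Finset Real MeasureTheory ProbabilityTheory

namespace LTCPaper

section Padding

variable {n : ℕ}

def halves (n : ℕ) : Fin n ⊕ Fin n ≃ Fin (2 * n) :=
  finSumFinEquiv.trans (finCongr (two_mul n).symm)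

def left (n : ℕ) : Fin n ↪ Fin (2 * n) :=
  Function.Embedding.inl.trans (halves n).toEmbedding

def right (n : ℕ) : Fin n ↪ Fin (2 * n) :=
  Function.Embedding.inr.trans (halves n).toEmbedding

@[simp] lemma left_ne_right (i j : Fin n) : left n i ≠ right n j := by
  simp [left, right]

@[simp] lemma right_ne_left (i j : Fin n) : right n i ≠ left n j :=
  (left_ne_right j i).symm

lemma hammingDist_eq_left_add_right (z w : Fin (2 * n) → Bool) :
    hammingDist z w =
      hammingDist (z ∘ left n) (w ∘ left n) + hammingDist (z ∘ right n) (w ∘ right n) := by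
  simp only [hammingDist, Finset.card_filter, ← (halves n).sum_comp, Fintype.sum_sum_type]
  rfl

def pad (x : Fin n → Bool) : Fin (2 * n) → Bool :=
  fun j => ((halves n).symm j).elim x fun _ => false

@[simp] lemma pad_left (x : Fin n → Bool) (i : Fin n) : pad x (left n i) = x i := by
  simp [pad, left]

@[simp] lemma pad_right (x : Fin n → Bool) (i : Fin n) : pad x (right n i) = false := by
  simp [pad, right]

@[simp] lemma pad_comp_left (x : Fin n → Bool) : pad x ∘ left n = x :=
  funext (pad_left x)

@[simp] lemma pad_comp_right (x : Fin n → Bool) : pad x ∘ right n = fun _ => false :=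
  funext (pad_right x)

lemma pad_injective : Function.Injective (pad (n := n)) := fun x y h =>
  funext fun i => by simpa using congrFun h (left n i)

lemma hammingDist_pad (x y : Fin n → Bool) : hammingDist (pad x) (pad y) = hammingDist x y := by
  simp [hammingDist_eq_left_add_right]

end Padding

lemma Edge.ext_of_sat {n : ℕ} {e e' : Edge n} (hsupp : e.1 = e'.1)
    (hsat : ∀ x, sat x e ↔ sat x e') : e = e' := by
  obtain ⟨s, f⟩ := e
  obtain ⟨s', f'⟩ := e'
  obtain rfl : s = s' := hsupp
  congr
  funext b
  classical
  let x : Fin n → Bool := fun i => if hi : i ∈ s then b ⟨i, hi⟩ else false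
  have hx : (fun v : {v // v ∈ s} => x v.1) = b := funext fun v => by simp [x, v.2]
  have := hsat x
  simp only [sat, hx] at this
  exact Bool.eq_iff_iff.2 this

section PadEdges

variable {n : ℕ}

def padEdge (e : Edge n) (S : Finset (Fin n)) : Edge (2 * n) :=
  ⟨e.1.map (left n) ∪ S.map (right n), fun a =>
    (e.2 fun v => a ⟨left n v, by simp [v.2]⟩) &&
      decide (∀ v : {v // v ∈ S}, a ⟨right n v, by simp [v.2]⟩ = false)⟩

lemma sat_padEdge (z : Fin (2 * n) → Bool) (e : Edge n) (S : Finset (Fin n)) :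
    sat z (padEdge e S) ↔ sat (z ∘ left n) e ∧ ∀ v ∈ S, z (right n v) = false := by
  simp [sat, padEdge]

lemma sat_pad_padEdge (x : Fin n → Bool) (e : Edge n) (S : Finset (Fin n)) :
    sat (pad x) (padEdge e S) ↔ sat x e := by
  simp [sat_padEdge, Function.comp_def]

lemma padEdge_injective2 : Function.Injective2 (padEdge (n := n)) := by
  intro e e' S S' h
  have hsupp := congrArg Sigma.fst h
  simp only [padEdge] at hsupp
  have he : e.1 = e'.1 := by
    ext i; simpa using congrArg (left n i ∈ ·) hsupp
  have hS : S = S' := by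
    ext i; simpa using congrArg (right n i ∈ ·) hsupp
  refine ⟨Edge.ext_of_sat he fun x => ?_, hS⟩
  rw [← sat_pad_padEdge x e S, h, sat_pad_padEdge]

def padEdges (E : Finset (Edge n)) (q' : ℕ) : Finset (Edge (2 * n)) :=
  Finset.image₂ padEdge E (Finset.powersetCard q' Finset.univ)

lemma card_padEdges (E : Finset (Edge n)) (q' : ℕ) :
    (padEdges E q').card = E.card * n.choose q' := by
  simp [padEdges, Finset.card_image₂ padEdge_injective2]

lemma card_le_of_mem_padEdges {E : Finset (Edge n)} {q q' : ℕ} (hE : ∀ e ∈ E, e.1.card ≤ q)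
    {e' : Edge (2 * n)} (he' : e' ∈ padEdges E q') : e'.1.card ≤ q + q' := by
  obtain ⟨e, he, S, hS, rfl⟩ := Finset.mem_image₂.1 he'
  calc (padEdge e S).1.card ≤ (e.1.map (left n)).card + (S.map (right n)).card :=
        Finset.card_union_le _ _
    _ ≤ q + q' := by
      rw [Finset.card_map, Finset.card_map, (Finset.mem_powersetCard.1 hS).2]
      exact Nat.add_le_add_right (hE e he) q'

end PadEdges

lemma Nat.mul_choose_le_mul_choose {k n q : ℕ} (hkn : k ≤ n) (hq : 0 < q) :
    n * k.choose q ≤ k * n.choose q := by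
  obtain _ | k := k
  · simp [Nat.choose_eq_zero_of_lt hq]
  obtain ⟨r, rfl⟩ := Nat.exists_eq_add_of_lt hq
  obtain ⟨n, rfl⟩ := Nat.exists_eq_add_of_lt (Nat.succ_le_iff.1 hkn)
  refine Nat.le_of_mul_le_mul_right ?_ (Nat.succ_pos r)
  have hk := Nat.add_one_mul_choose_eq k r
  have hn := Nat.add_one_mul_choose_eq (k + n) r
  have hmono := Nat.choose_le_choose r (Nat.le_add_right k n)
  simp only [zero_add] at *
  rw [mul_assoc, mul_assoc, ← hk, ← hn, mul_left_comm]
  gcongr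

lemma card_mul_choose_le_card_filter_not_disjoint {α : Type*} [Fintype α] [DecidableEq α]
    (T : Finset α) {q : ℕ} (hq : 0 < q) :
    T.card * (Fintype.card α).choose q ≤
      Fintype.card α * ((Finset.powersetCard q Finset.univ).filter (¬ Disjoint · T)).card := by
  set P := Finset.powersetCard q (Finset.univ : Finset α)
  have hsplit := Finset.card_filter_add_card_filter_not (s := P) (Disjoint · T)
  have havoid : (P.filter (Disjoint · T)).card = (Fintype.card α - T.card).choose q := by
    rw [← Finset.card_compl, ← Finset.card_powersetCard]
    congr 1
    ext S
    simp [P, Finset.subset_compl_iff_disjoint_right, and_comm]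
  have hbound := Nat.mul_choose_le_mul_choose (Nat.sub_le (Fintype.card α) T.card) hq
  have hT := Finset.card_le_univ T
  rw [Finset.card_powersetCard, Finset.card_univ, havoid] at hsplit
  zify [hT] at *
  nlinarith

section Soundness

variable {n q' : ℕ} {E : Finset (Edge n)} {z : Fin (2 * n) → Bool}

lemma card_mul_card_le_card_filter_not_sat {A : Finset (Edge n)} {B : Finset (Finset (Fin n))}
    (hA : A ⊆ E) (hB : B ⊆ Finset.powersetCard q' Finset.univ)
    (hrej : ∀ e ∈ A, ∀ S ∈ B, ¬ sat z (padEdge e S)) :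
    A.card * B.card ≤ ((padEdges E q').filter (¬ sat z ·)).card := by
  rw [← Finset.card_image₂ padEdge_injective2]
  refine Finset.card_le_card fun e' he' => ?_
  obtain ⟨e, he, S, hS, rfl⟩ := Finset.mem_image₂.1 he'
  exact Finset.mem_filter.2 ⟨Finset.mem_image₂_of_mem (hA he) (hB hS), hrej e he S hS⟩

lemma farFrom_comp_left {C : Set (Fin n → Bool)} {τ : ℝ} (hn : 0 < n)
    (hz : farFrom (pad '' C) z τ)
    (hlight : (hammingDist (z ∘ right n) fun _ => false : ℝ) < τ * n) :
    farFrom C (z ∘ left n) τ := by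
  intro y hy
  have hzy := hz (pad y) ⟨y, hy, rfl⟩
  rw [relDist, hammingDist_eq_left_add_right, le_div_iff₀ (by positivity)] at hzy
  rw [relDist, le_div_iff₀ (Nat.cast_pos.2 hn)]
  push_cast at hzy
  simp only [pad_comp_left, pad_comp_right] at hzy
  linarith

lemma card_filter_not_sat_of_farFrom_left {ε : ℝ} (hF : ε * E.card ≤
      ((E.filter fun e => ¬ sat (z ∘ left n) e).card : ℝ)) :
    ε * (E.card * n.choose q' : ℕ) ≤ ((padEdges E q').filter (¬ sat z ·)).card := by
  have hcount := card_mul_card_le_card_filter_not_sat (q' := q')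
    (Finset.filter_subset (fun e => ¬ sat (z ∘ left n) e) E) subset_rfl fun e he S _ hsat =>
      (Finset.mem_filter.1 he).2 ((sat_padEdge z e S).1 hsat).1
  rw [Finset.card_powersetCard, Finset.card_univ, Fintype.card_fin] at hcount
  calc ε * (E.card * n.choose q' : ℕ) = ε * E.card * n.choose q' := by push_cast; ring
    _ ≤ (E.filter fun e => ¬ sat (z ∘ left n) e).card * n.choose q' := by gcongr
    _ ≤ _ := by exact_mod_cast hcount

lemma card_filter_not_sat_of_heavy_right {τ : ℝ} (hq' : 0 < q') (hn : 0 < n)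
    (hheavy : τ * n ≤ (hammingDist (z ∘ right n) fun _ => false : ℝ)) :
    τ * (E.card * n.choose q' : ℕ) ≤ ((padEdges E q').filter (¬ sat z ·)).card := by
  set T := Finset.univ.filter fun i => z (right n i) ≠ false
  have hhit := card_mul_choose_le_card_filter_not_disjoint T hq'
  have hcount := card_mul_card_le_card_filter_not_sat (E := E) (q' := q') subset_rfl
    (Finset.filter_subset (¬ Disjoint · T) _) fun e _ S hS hsat => by
      obtain ⟨v, hvS, hvT⟩ := Finset.not_disjoint_iff.1 (Finset.mem_filter.1 hS).2
      exact (Finset.mem_filter.1 hvT).2 (((sat_padEdge z e S).1 hsat).2 v hvS)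
  set H := ((Finset.powersetCard q' Finset.univ).filter (¬ Disjoint · T)).card
  simp only [Fintype.card_fin] at hhit
  have hT : (T.card : ℝ) = hammingDist (z ∘ right n) fun _ => false := rfl
  have hH : τ * n.choose q' ≤ H := by
    refine le_of_mul_le_mul_left ?_ (Nat.cast_pos.2 hn : (0 : ℝ) < n)
    calc (n : ℝ) * (τ * n.choose q') = τ * n * n.choose q' := by ring
      _ ≤ T.card * n.choose q' := by rw [hT]; gcongr
      _ ≤ n * H := by exact_mod_cast hhit
  calc τ * (E.card * n.choose q' : ℕ) = E.card * (τ * n.choose q') := by push_cast; ring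
    _ ≤ E.card * H := by gcongr
    _ ≤ _ := by exact_mod_cast hcount

end Soundness

lemma isTestHypergraph_padEdges {n q' : ℕ} {C : Set (Fin n → Bool)} {E : Finset (Edge n)}
    {τ ε : ℝ} (hq' : 0 < q') (hn : 0 < n) (hE : IsTestHypergraph C E τ ε) :
    IsTestHypergraph (pad '' C) (padEdges E q') τ (min ε τ) := by
  refine ⟨?_, fun z hz => ?_⟩
  · rintro _ ⟨x, hx, rfl⟩ e' he'
    obtain ⟨e, he, S, -, rfl⟩ := Finset.mem_image₂.1 he'
    exact (sat_pad_padEdge x e S).2 (hE.1 x hx e he)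
  rw [card_padEdges]
  rcases lt_or_ge (hammingDist (z ∘ right n) fun _ => false : ℝ) (τ * n) with hlight | hheavy
  · exact (mul_le_mul_of_nonneg_right (min_le_left ε τ) (Nat.cast_nonneg _)).trans
      (card_filter_not_sat_of_farFrom_left (hE.2 _ (farFrom_comp_left hn hz hlight)))
  · exact (mul_le_mul_of_nonneg_right (min_le_right ε τ) (Nat.cast_nonneg _)).trans
      (card_filter_not_sat_of_heavy_right hq' hn hheavy)

theorem padding_lemma_general (τ ε : ℝ) (hτ : 0 < τ) (hε : 0 < ε)
    (q q' : ℕ) (hq' : 1 ≤ q') :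
    ∃ ε' : ℝ, 0 < ε' ∧
      ∀ (δ : ℝ), 0 < δ → ∀ n : ℕ, q' ≤ n →
        ∀ (C : Set (Fin n → Bool)) (E : Finset (Edge n)),
          hasDistance C δ →
          (∀ e ∈ E, e.1.card ≤ q) →
          IsTestHypergraph C E τ ε →
          ∃ (C' : Set (Fin (2 * n) → Bool)) (E' : Finset (Edge (2 * n))),
            C'.ncard = C.ncard ∧
            (∀ x ∈ C', ∀ y ∈ C', x ≠ y → δ * n ≤ (hammingDist x y : ℝ)) ∧
            (∀ e ∈ E', e.1.card ≤ q + q') ∧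
            IsTestHypergraph C' E' τ ε' ∧
            E'.card = E.card * n.choose q' := by
  refine ⟨min ε τ, lt_min hε hτ, fun δ _ n hn C E hdist hcard htest => ?_⟩
  have hn₀ : 0 < n := hq'.trans hn
  refine ⟨pad '' C, padEdges E q', Set.ncard_image_of_injective C pad_injective, ?_, ?_,
    isTestHypergraph_padEdges hq' hn₀ htest, card_padEdges E q'⟩
  · rintro _ ⟨x, hx, rfl⟩ _ ⟨y, hy, rfl⟩ hne
    have hxy := hdist x hx y hy (ne_of_apply_ne pad hne)
    rw [relDist, le_div_iff₀ (Nat.cast_pos.2 hn₀)] at hxy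
    rwa [hammingDist_pad]
  · exact fun e' => card_le_of_mem_padEdges hcard

/-- **Lemma (padding increases the number of queries and hyperedges).** From a `q`-query
`(τ,ε)`-LTC of length `n ≥ q'` and relative distance at least `δ` one gets a `(q+q')`-query code
of length `2n`, equal cardinality (hence half the rate), relative distance at least `δ/2`
(distinct codewords differ in at least `δ·n` coordinates), with a `(τ,ε')`-test-hypergraph having
exactly `|E|·(n choose q')` hyperedges, where `ε' > 0` depends only on `τ, ε, q, q'`. -/
theorem padding_lemma (τ ε : ℝ) (hτ : 0 < τ) (hε : 0 < ε)
    (q q' : ℕ) (hq : 3 ≤ q) (hq' : 1 ≤ q') :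
    ∃ ε' : ℝ, 0 < ε' ∧
      ∀ (δ : ℝ), 0 < δ → ∀ n : ℕ, q' ≤ n →
        ∀ (C : Set (Fin n → Bool)) (E : Finset (Edge n)),
          hasDistance C δ →
          (∀ e ∈ E, e.1.card ≤ q) →
          IsTestHypergraph C E τ ε →
          ∃ (C' : Set (Fin (2 * n) → Bool)) (E' : Finset (Edge (2 * n))),
            C'.ncard = C.ncard ∧
            (∀ x ∈ C', ∀ y ∈ C', x ≠ y → δ * n ≤ (hammingDist x y : ℝ)) ∧
            (∀ e ∈ E', e.1.card ≤ q + q') ∧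
            IsTestHypergraph C' E' τ ε' ∧
            E'.card = E.card * n.choose q' :=
  padding_lemma_general τ ε hτ hε q q' hq'

end LTCPaper
end
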